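/- arXiv:1208.2898 — 6 statements merged into one kernel-verified Lean document; each statement's English description precedes it below -/
import Mathlib

section
/- Let A be an affine hyperplane arrangement in ℂˡ and let cA be its cone in ℂ^{l+1}. Then π₁(M(cA)) is isomorphic to π₁(M(A)) × ℤ. -/
/-- The complement `M(A)` of the affine arrangement in `ℂˡ` with hyperplanes
`Hᵢ = {x | φᵢ x = cᵢ}`. -/
def affComplement (l n : ℕ) (φ : Fin n → ((Fin l → ℂ) →ₗ[ℂ] ℂ)) (c : Fin n → ℂ) :
    Set (Fin l → ℂ) :=
  {x | ∀ i, φ i x ≠ c i}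

/-- The complement `M(cA)` of the cone of the arrangement, an arrangement in
`ℂ^{l+1} = ℂ × ℂˡ` consisting of `{(t,x) | t = 0}` and the `{(t,x) | φᵢ x = cᵢ · t}`. -/
def coneComplement (l n : ℕ) (φ : Fin n → ((Fin l → ℂ) →ₗ[ℂ] ℂ)) (c : Fin n → ℂ) :
    Set (ℂ × (Fin l → ℂ)) :=
  {p | p.1 ≠ 0 ∧ ∀ i, φ i p.2 ≠ c i * p.1}

/-!
Dehomogenization `(t, x) ↦ (t, t⁻¹ • x)` is a homeomorphism `M(cA) ≃ (ℂ \ {0}) × M(A)`, and the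
fundamental group of a product is the product of the fundamental groups. The exponential map
`ℂ → ℂ \ {0}` is a covering with deck group `2πiℤ` and simply connected total space, so
`π₁(ℂ \ {0}) ≅ ℤ`. Finally `M(A)` is path connected, because a complex line through two of its
points meets each hyperplane in at most one point, and the plane minus countably many points is
path connected; hence the base point of `π₁(M(A))` is immaterial.
-/

open Complex Set

noncomputable section

def AddSubgroup.zmultiplesAddEquivInt {K : Type*} [Ring K] [NoZeroDivisors K] [CharZero K]
    {a : K} (ha : a ≠ 0) : zmultiples a ≃+ ℤ :=
  ((AddMonoidHom.ofInjective (f := zmultiplesHom K a) fun m n h => by simpa [ha] using h).trans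
    (AddEquiv.addSubgroupCongr (range_zmultiplesHom a))).symm

def Complex.fundamentalGroupNeZeroMulEquivInt (z : {z : ℂ // z ≠ 0}) :
    FundamentalGroup {z : ℂ // z ≠ 0} z ≃* Multiplicative ℤ :=
  (isAddQuotientCoveringMap_exp.fundamentalGroupEquiv ⟨log z, Subtype.ext (exp_log z.2)⟩).trans <|
    MulOpposite.opMulEquiv.symm.trans
      (AddSubgroup.zmultiplesAddEquivInt two_pi_I_ne_zero).toMultiplicative

namespace FundamentalGroup

variable {X Y : Type*} [TopologicalSpace X] [TopologicalSpace Y]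

def prodMulEquiv (x : X) (y : Y) :
    FundamentalGroup (X × Y) (x, y) ≃* FundamentalGroup X x × FundamentalGroup Y y :=
  MulEquiv.ofBijective ((map .fst (x, y)).prod (map .snd (x, y)))
    ⟨Function.LeftInverse.injective (g := fun p => fromPath (Path.Homotopic.prod p.1 p.2))
      fun g => Path.Homotopic.prod_projLeft_projRight (toPath g),
     Function.RightInverse.surjective (g := fun p => fromPath (Path.Homotopic.prod p.1 p.2))
      fun p => Prod.ext (Path.Homotopic.projLeft_prod (toPath p.1) (toPath p.2))
        (Path.Homotopic.projRight_prod (toPath p.1) (toPath p.2))⟩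

def mulEquivOfHomeomorph (h : X ≃ₜ Y) (x : X) :
    FundamentalGroup X x ≃* FundamentalGroup Y (h x) :=
  (FundamentalGroupoidFunctor.equivOfHomotopyEquiv (X := TopCat.of X) (Y := TopCat.of Y)
    h.toHomotopyEquiv).fullyFaithfulFunctor.mulEquivEnd (FundamentalGroupoid.mk x)

end FundamentalGroup

section Hyperplanes

variable {V : Type*} [AddCommGroup V] [Module ℂ V]

lemma subsingleton_lineMap_preimage_hyperplane (f : V →ₗ[ℂ] ℂ) {c : ℂ} {a : V} (ha : f a ≠ c)
    (b : V) : {z : ℂ | f (AffineMap.lineMap a b z) = c}.Subsingleton := by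
  intro z hz w hw
  simp only [mem_ofPred_eq, AffineMap.lineMap_apply_module', map_add, map_smul, map_sub,
    smul_eq_mul] at hz hw
  have hba : f b - f a ≠ 0 := fun h => ha (by rw [← hz, h, mul_zero, zero_add])
  exact mul_right_cancel₀ hba (by linear_combination hz - hw)

variable {ι : Type*} [TopologicalSpace V] [IsTopologicalAddGroup V] [ContinuousSMul ℂ V]

theorem isPathConnected_setOf_forall_ne [Countable ι] (φ : ι → V →ₗ[ℂ] ℂ)
    (c : ι → ℂ) (hne : {x | ∀ i, φ i x ≠ c i}.Nonempty) :
    IsPathConnected {x | ∀ i, φ i x ≠ c i} := by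
  obtain ⟨a, ha⟩ := hne
  refine ⟨a, ha, fun {b} hb => ?_⟩
  set S := {x | ∀ i, φ i x ≠ c i}
  set L : ℂ →ᵃ[ℂ] V := AffineMap.lineMap a b
  have hbad : (L ⁻¹' S)ᶜ.Countable := by
    have : (L ⁻¹' S)ᶜ = ⋃ i, {z : ℂ | φ i (L z) = c i} := by
      ext z; simp [S, L]
    rw [this]
    exact countable_iUnion fun i => (subsingleton_lineMap_preimage_hyperplane _ (ha i) b).countable
  have hrank : 1 < Module.rank ℝ ℂ := by rw [Complex.rank_real_complex]; norm_num
  have hjoin : JoinedIn (L ⁻¹' S) 0 1 :=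
    (compl_compl (L ⁻¹' S) ▸ hbad.isPathConnected_compl_of_one_lt_rank hrank).joinedIn 0
      (by simpa [L] using ha) 1 (by simpa [L] using hb)
  simpa [L] using (hjoin.map AffineMap.lineMap_continuous).mono (image_preimage_subset L S)

def coneComplementHomeomorph (φ : ι → V →ₗ[ℂ] ℂ) (c : ι → ℂ) :
    {p : ℂ × V | p.1 ≠ 0 ∧ ∀ i, φ i p.2 ≠ c i * p.1} ≃ₜ
      {z : ℂ // z ≠ 0} × {x | ∀ i, φ i x ≠ c i} where
  toFun p := (⟨p.1.1, p.2.1⟩, ⟨p.1.1⁻¹ • p.1.2, fun i h => p.2.2 i <| by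
    rw [map_smul, smul_eq_mul, inv_mul_eq_iff_eq_mul₀ p.2.1] at h
    rw [h, mul_comm]⟩)
  invFun q := ⟨(q.1, q.1.1 • q.2.1), q.1.2, fun i h => q.2.2 i <| by
    rw [map_smul, smul_eq_mul, mul_comm] at h
    exact mul_right_cancel₀ q.1.2 h⟩
  left_inv p := Subtype.ext <| Prod.ext rfl <| smul_inv_smul₀ p.2.1 _
  right_inv q := Prod.ext rfl <| Subtype.ext <| inv_smul_smul₀ q.1.2 _
  continuous_toFun := by
    have : Continuous fun p : {p : ℂ × V | p.1 ≠ 0 ∧ ∀ i, φ i p.2 ≠ c i * p.1} => p.1.1⁻¹ :=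
      (continuous_fst.comp continuous_subtype_val).inv₀ fun p => p.2.1
    fun_prop
  continuous_invFun := by fun_prop

end Hyperplanes

end

theorem fundamental_group_of_cone_general
    (l n : ℕ) (φ : Fin n → ((Fin l → ℂ) →ₗ[ℂ] ℂ)) (c : Fin n → ℂ)
    (x : ↥(coneComplement l n φ c)) (y : ↥(affComplement l n φ c)) :
    Nonempty (FundamentalGroup ↥(coneComplement l n φ c) x ≃*
      FundamentalGroup ↥(affComplement l n φ c) y × Multiplicative ℤ) := by
  have : PathConnectedSpace (affComplement l n φ c) :=
    isPathConnected_iff_pathConnectedSpace.mp (isPathConnected_setOf_forall_ne φ c ⟨y, y.2⟩)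
  let h : coneComplement l n φ c ≃ₜ {z : ℂ // z ≠ 0} × affComplement l n φ c :=
    coneComplementHomeomorph φ c
  exact ⟨(FundamentalGroup.mulEquivOfHomeomorph h x).trans <|
    (FundamentalGroup.prodMulEquiv (h x).1 (h x).2).trans <|
    ((fundamentalGroupNeZeroMulEquivInt _).prodCongr
      (FundamentalGroup.fundamentalGroupMulEquivOfPathConnected _ y)).trans MulEquiv.prodComm⟩

theorem fundamental_group_of_cone
    (l n : ℕ) (φ : Fin n → ((Fin l → ℂ) →ₗ[ℂ] ℂ)) (c : Fin n → ℂ)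
    (hφ : ∀ i, φ i ≠ 0)
    (hdist : Function.Injective fun i => ({x | φ i x = c i} : Set (Fin l → ℂ)))
    (x : ↥(coneComplement l n φ c)) (y : ↥(affComplement l n φ c)) :
    Nonempty (FundamentalGroup ↥(coneComplement l n φ c) x ≃*
      FundamentalGroup ↥(affComplement l n φ c) y × Multiplicative ℤ) :=
  fundamental_group_of_cone_general l n φ c x y
end

section
/- Let A* be a projective line arrangement in ℙ²(ℂ). If some graph of Fan type F ∈ 𝓕(A*) is disconnected, then A* has a decone with a general position partition. -/
open scoped Classical

/-- The complex projective plane `ℙ²(ℂ)`, the projectivization of `ℂ³`. -/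
abbrev P2 : Type := Projectivization ℂ (Fin 3 → ℂ)

/-- A projective line in `ℙ²(ℂ)`: the image of a 2-dimensional linear subspace of `ℂ³`. -/
def IsProjLine (L : Set P2) : Prop :=
  ∃ W : Submodule ℂ (Fin 3 → ℂ), Module.finrank ℂ W = 2 ∧ L = {p : P2 | p.rep ∈ W}

/-- The multiplicity of a point in an arrangement: the number of lines passing through it. -/
noncomputable def mult (A : Finset (Set P2)) (p : P2) : ℕ :=
  (A.filter (fun L => p ∈ L)).card

/-- `M₃(A)`: the set of points lying on at least three lines of `A`. -/
def M3 (A : Finset (Set P2)) : Set P2 := {p | 3 ≤ mult A p}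

/-- `A` has a decone with a general position partition. -/
def HasDeconeGPP (A : Finset (Set P2)) : Prop :=
  ∃ L ∈ A, ∃ C₁ C₂ : Finset (Set P2),
    C₁.Nonempty ∧ C₂.Nonempty ∧ Disjoint C₁ C₂ ∧ C₁ ∪ C₂ = A.erase L ∧
    ∀ H₁ ∈ C₁, ∀ H₂ ∈ C₂, ∀ p ∈ H₁ ∩ H₂, ∀ K ∈ A, p ∈ K → K = H₁ ∨ K = H₂

/-- `F` is a graph of Fan type for the arrangement `A`: its vertices are the points of
`M₃(A)`, every edge joins two points on a common line of `A`, and for each line `L` the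
edges joining points of `M₃(A) ∩ L` are exactly the consecutive pairs of some enumeration
of `M₃(A) ∩ L`. -/
def IsFanGraph (A : Finset (Set P2)) (F : SimpleGraph ↥(M3 A)) : Prop :=
  (∀ v w : ↥(M3 A), F.Adj v w → ∃ L ∈ A, (v : P2) ∈ L ∧ (w : P2) ∈ L) ∧
  ∀ L ∈ A, (∃ v : ↥(M3 A), (v : P2) ∈ L) →
    ∃ (m : ℕ) (e : Fin m → ↥(M3 A)), Function.Injective e ∧
      (∀ v : ↥(M3 A), (v : P2) ∈ L ↔ ∃ i, e i = v) ∧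
      (∀ v w : ↥(M3 A), (v : P2) ∈ L → (w : P2) ∈ L →
        (F.Adj v w ↔ ∃ i j : Fin m, (j : ℕ) = (i : ℕ) + 1 ∧
          ((e i = v ∧ e j = w) ∨ (e i = w ∧ e j = v))))

/-- Any two points of `M₃(A)` lying on a common line of `A` are reachable in a Fan graph. -/
lemma reach_on_line (A : Finset (Set P2)) (F : SimpleGraph ↥(M3 A))
    (hF : IsFanGraph A F) (L : Set P2) (hL : L ∈ A)
    (p q : ↥(M3 A)) (hp : (p : P2) ∈ L) (hq : (q : P2) ∈ L) :
    F.Reachable p q := by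
  obtain ⟨m, e, he, hcov, hadj⟩ := hF.2 L hL ⟨p, hp⟩
  have hmemL : ∀ k : Fin m, (e k : P2) ∈ L := fun k => (hcov (e k)).mpr ⟨k, rfl⟩
  have aux : ∀ n : ℕ, ∀ k l : Fin m, (l : ℕ) = (k : ℕ) + n → F.Reachable (e k) (e l) := by
    intro n
    induction n with
    | zero =>
      intro k l h
      have : k = l := Fin.ext (by omega)
      rw [this]
    | succ n ih =>
      intro k l h
      have hlt : (k : ℕ) + n < m := by omega
      have h1 : F.Reachable (e k) (e ⟨(k : ℕ) + n, hlt⟩) := ih k ⟨(k : ℕ) + n, hlt⟩ rfl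
      have h2 : F.Adj (e ⟨(k : ℕ) + n, hlt⟩) (e l) := by
        refine (hadj (e ⟨(k : ℕ) + n, hlt⟩) (e l) (hmemL _) (hmemL _)).mpr
          ⟨⟨(k : ℕ) + n, hlt⟩, l, ?_, Or.inl ⟨rfl, rfl⟩⟩
        simp only [Fin.val_mk]
        omega
      exact h1.trans h2.reachable
  obtain ⟨i, hi⟩ := (hcov p).mp hp
  obtain ⟨j, hj⟩ := (hcov q).mp hq
  rcases le_total (i : ℕ) (j : ℕ) with h | h
  · have := aux ((j : ℕ) - (i : ℕ)) i j (by omega)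
    rwa [hi, hj] at this
  · have := aux ((i : ℕ) - (j : ℕ)) j i (by omega)
    rw [hi, hj] at this
    exact this.symm

theorem disconnected_fan_graph_gives_gpp
    (A : Finset (Set P2)) (hA : ∀ L ∈ A, IsProjLine L)
    (F : SimpleGraph ↥(M3 A)) (hF : IsFanGraph A F)
    (hdisc : ¬ F.Preconnected) :
    HasDeconeGPP A := by
  rw [SimpleGraph.Preconnected] at hdisc
  push_neg at hdisc
  obtain ⟨u, v, huv⟩ := hdisc
  -- lines containing an M3 point reachable from u
  set AS : Finset (Set P2) :=
    A.filter (fun L => ∃ x : ↥(M3 A), F.Reachable u x ∧ (x : P2) ∈ L) with hAS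
  have hASsub : AS ⊆ A := Finset.filter_subset _ _
  have hmultu : 3 ≤ (A.filter (fun L => (u : P2) ∈ L)).card := u.2
  have hmultv : 3 ≤ (A.filter (fun L => (v : P2) ∈ L)).card := v.2
  -- every line through u lies in AS
  have hu_sub : A.filter (fun L => (u : P2) ∈ L) ⊆ AS := by
    intro L hL
    rw [Finset.mem_filter] at hL ⊢
    exact ⟨hL.1, u, SimpleGraph.Reachable.refl u, hL.2⟩
  have hAScard : 3 ≤ AS.card := le_trans hmultu (Finset.card_le_card hu_sub)
  -- pick a line L₀ through u
  obtain ⟨L₀, hL₀⟩ := Finset.card_pos.mp (by omega : 0 < (A.filter (fun L => (u : P2) ∈ L)).card)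
  have hL₀S : L₀ ∈ AS := hu_sub hL₀
  have hL₀A : L₀ ∈ A := hASsub hL₀S
  refine ⟨L₀, hL₀A, AS.erase L₀, A \ AS, ?_, ?_, ?_, ?_, ?_⟩
  · -- C₁ nonempty
    rw [← Finset.card_pos, Finset.card_erase_of_mem hL₀S]
    omega
  · -- C₂ nonempty : a line through v is not in AS
    obtain ⟨K, hK⟩ := Finset.card_pos.mp (by omega : 0 < (A.filter (fun L => (v : P2) ∈ L)).card)
    rw [Finset.mem_filter] at hK
    refine ⟨K, Finset.mem_sdiff.mpr ⟨hK.1, fun hKS => ?_⟩⟩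
    rw [hAS, Finset.mem_filter] at hKS
    obtain ⟨hKA, x, hux, hxK⟩ := hKS
    exact huv (hux.trans (reach_on_line A F hF K hKA x v hxK hK.2))
  · -- disjoint
    rw [Finset.disjoint_left]
    intro a ha hb
    exact (Finset.mem_sdiff.mp hb).2 (Finset.mem_of_mem_erase ha)
  · -- union
    ext x
    simp only [Finset.mem_union, Finset.mem_erase, Finset.mem_sdiff]
    constructor
    · rintro (⟨hne, hx⟩ | ⟨hx, hnx⟩)
      · exact ⟨hne, hASsub hx⟩
      · exact ⟨fun h => hnx (h ▸ hL₀S), hx⟩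
    · rintro ⟨hne, hx⟩
      by_cases hxs : x ∈ AS
      · exact Or.inl ⟨hne, hxs⟩
      · exact Or.inr ⟨hx, hxs⟩
  · -- general position between C₁ and C₂
    intro H₁ h₁ H₂ h₂ p hp K hK hpK
    by_contra hcon
    push_neg at hcon
    obtain ⟨hKH₁, hKH₂⟩ := hcon
    have h₁S : H₁ ∈ AS := Finset.mem_of_mem_erase h₁
    have h₂' := Finset.mem_sdiff.mp h₂
    have hH₁A : H₁ ∈ A := hASsub h₁S
    have hne : H₁ ≠ H₂ := fun h => h₂'.2 (h ▸ h₁S)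
    obtain ⟨hpH₁, hpH₂⟩ := hp
    -- p is a triple point
    have hpM3 : p ∈ M3 A := by
      have hsub : ({H₁, H₂, K} : Finset (Set P2)) ⊆ A.filter (fun L => p ∈ L) := by
        intro x hx
        rw [Finset.mem_filter]
        simp only [Finset.mem_insert, Finset.mem_singleton] at hx
        rcases hx with rfl | rfl | rfl
        · exact ⟨hH₁A, hpH₁⟩
        · exact ⟨h₂'.1, hpH₂⟩
        · exact ⟨hK, hpK⟩
      have hcard : ({H₁, H₂, K} : Finset (Set P2)).card = 3 := by
        rw [Finset.card_insert_of_notMem (by simp [hne, Ne.symm hKH₁]),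
          Finset.card_insert_of_notMem (by simp [Ne.symm hKH₂]), Finset.card_singleton]
      show 3 ≤ mult A p
      rw [mult, ← hcard]
      exact Finset.card_le_card hsub
    -- p is reachable from u (via H₁ ∈ AS), so H₂ ∈ AS, contradiction
    rw [hAS, Finset.mem_filter] at h₁S
    obtain ⟨_, x, hux, hxH₁⟩ := h₁S
    have hreach : F.Reachable u ⟨p, hpM3⟩ :=
      hux.trans (reach_on_line A F hF H₁ hH₁A x ⟨p, hpM3⟩ hxH₁ hpH₁)
    exact h₂'.2 (Finset.mem_filter.mpr ⟨h₂'.1, ⟨p, hpM3⟩, hreach, hpH₂⟩)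
end

section
/- Let A* be a projective line arrangement in ℙ²(ℂ), let F ∈ 𝓕(A*) be a graph of Fan type for A*, and let C be the vertex set of a connected component of F. Let 𝒞 ⊆ A* be the set of lines of A* containing at least one vertex in C, and let 𝒟 = A* ∖ 𝒞. Then every line H_C ∈ 𝒞 and every line H_D ∈ 𝒟 intersect in a point of multiplicity two in A*, i.e., no line of A* other than H_C and H_D passes through the intersection point H_C ∩ H_D. -/
open scoped Classical

/-- The path graph maps onto any sequence whose consecutive terms are adjacent. -/
lemma SimpleGraph.reachable_of_adj_succ {V : Type*} {G : SimpleGraph V} {m : ℕ} (e : Fin m → V)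
    (he : ∀ i j : Fin m, (j : ℕ) = i + 1 → G.Adj (e i) (e j)) (i j : Fin m) :
    G.Reachable (e i) (e j) :=
  (pathGraph_preconnected m i j).map
    { toFun := e
      map_rel' := fun hij => (pathGraph_adj.mp hij).elim
        (fun h => he _ _ h.symm) (fun h => (he _ _ h.symm).symm) }

lemma IsFanGraph.reachable_of_mem_line {A : Finset (Set P2)} {F : SimpleGraph ↥(M3 A)}
    (hF : IsFanGraph A F) {L : Set P2} (hL : L ∈ A) {v w : ↥(M3 A)}
    (hv : (v : P2) ∈ L) (hw : (w : P2) ∈ L) : F.Reachable v w := by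
  obtain ⟨m, e, -, hmem, hadj⟩ := hF.2 L hL ⟨v, hv⟩
  have heL (i : Fin m) : ((e i : ↥(M3 A)) : P2) ∈ L := (hmem (e i)).mpr ⟨i, rfl⟩
  obtain ⟨i, rfl⟩ := (hmem v).mp hv
  obtain ⟨j, rfl⟩ := (hmem w).mp hw
  exact SimpleGraph.reachable_of_adj_succ e
    (fun i j hij => (hadj _ _ (heL i) (heL j)).mpr ⟨i, j, hij, Or.inl ⟨rfl, rfl⟩⟩) i j

lemma mem_M3_of_mem_three_lines {A : Finset (Set P2)} {p : P2} {L₁ L₂ L₃ : Set P2}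
    (h₁ : L₁ ∈ A) (h₂ : L₂ ∈ A) (h₃ : L₃ ∈ A)
    (h₁₂ : L₁ ≠ L₂) (h₁₃ : L₁ ≠ L₃) (h₂₃ : L₂ ≠ L₃)
    (hp₁ : p ∈ L₁) (hp₂ : p ∈ L₂) (hp₃ : p ∈ L₃) : p ∈ M3 A := by
  have hsub : ({L₁, L₂, L₃} : Finset (Set P2)) ⊆ A.filter (fun L => p ∈ L) := by
    intro L hL
    simp only [Finset.mem_insert, Finset.mem_singleton] at hL
    rcases hL with rfl | rfl | rfl <;> simp [*]
  calc 3 = ({L₁, L₂, L₃} : Finset (Set P2)).card := (Finset.card_eq_three.mpr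
          ⟨L₁, L₂, L₃, h₁₂, h₁₃, h₂₃, rfl⟩).symm
    _ ≤ mult A p := Finset.card_le_card hsub

/-- A point of `H_C ∩ H_D` on a third line would be a vertex of `F` on `H_C`, hence in the
component `C`, and also on `H_D`. -/
theorem component_lines_meet_rest_transversally_general
    (A : Finset (Set P2))
    (F : SimpleGraph ↥(M3 A)) (hF : IsFanGraph A F)
    (v₀ : ↥(M3 A)) (C : Set ↥(M3 A)) (hC : C = {w | F.Reachable v₀ w})
    (H_C : Set P2) (hHC : H_C ∈ A) (hHCv : ∃ v ∈ C, (v : P2) ∈ H_C)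
    (H_D : Set P2) (hHD : H_D ∈ A) (hHDv : ¬ ∃ v ∈ C, (v : P2) ∈ H_D) :
    ∀ p ∈ H_C ∩ H_D, ∀ K ∈ A, p ∈ K → K = H_C ∨ K = H_D := by
  rintro p ⟨hpC, hpD⟩ K hK hpK
  by_contra! hKCD
  obtain ⟨v, hvC, hvHC⟩ := hHCv
  have hCD : H_C ≠ H_D := fun h => hHDv ⟨v, hvC, h ▸ hvHC⟩
  have hp : p ∈ M3 A := mem_M3_of_mem_three_lines hHC hHD hK hCD
    (Ne.symm hKCD.1) (Ne.symm hKCD.2) hpC hpD hpK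
  have hpReach : F.Reachable v ⟨p, hp⟩ := hF.reachable_of_mem_line hHC hvHC hpC
  subst hC
  exact hHDv ⟨⟨p, hp⟩, hvC.trans hpReach, hpD⟩

theorem component_lines_meet_rest_transversally
    (A : Finset (Set P2)) (hA : ∀ L ∈ A, IsProjLine L)
    (F : SimpleGraph ↥(M3 A)) (hF : IsFanGraph A F)
    (v₀ : ↥(M3 A)) (C : Set ↥(M3 A)) (hC : C = {w | F.Reachable v₀ w})
    (H_C : Set P2) (hHC : H_C ∈ A) (hHCv : ∃ v ∈ C, (v : P2) ∈ H_C)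
    (H_D : Set P2) (hHD : H_D ∈ A) (hHDv : ¬ ∃ v ∈ C, (v : P2) ∈ H_D) :
    ∀ p ∈ H_C ∩ H_D, ∀ K ∈ A, p ∈ K → K = H_C ∨ K = H_D :=
  component_lines_meet_rest_transversally_general A F hF v₀ C hC H_C hHC hHCv H_D hHD hHDv
end

section
/- Let A* be a projective line arrangement in ℙ²(ℂ) containing at least three lines. If there is a line H ∈ A* such that every intersection point of lines of A* lying on H has multiplicity two in A*, then A* has a decone with a general position partition. -/
open scoped Classical

theorem line_with_only_double_points_gives_gpp
    (A : Finset (Set P2)) (hA : ∀ L ∈ A, IsProjLine L) (hcard : 3 ≤ A.card)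
    (H : Set P2) (hH : H ∈ A)
    (hdouble : ∀ p ∈ H, ∀ K ∈ A, K ≠ H → p ∈ K → mult A p = 2) :
    HasDeconeGPP A := by
  -- pick a line L ≠ H
  have herase : (A.erase H).Nonempty := by
    rw [← Finset.card_pos, Finset.card_erase_of_mem hH]; omega
  obtain ⟨L, hL⟩ := herase
  have hLA : L ∈ A := Finset.mem_of_mem_erase hL
  have hLH : L ≠ H := Finset.ne_of_mem_erase hL
  refine ⟨L, hLA, {H}, (A.erase L).erase H, Finset.singleton_nonempty H, ?_, ?_, ?_, ?_⟩
  · rw [← Finset.card_pos, Finset.card_erase_of_mem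
      (Finset.mem_erase.mpr ⟨Ne.symm hLH, hH⟩), Finset.card_erase_of_mem hLA]
    omega
  · simp [Finset.disjoint_left]
  · apply Finset.Subset.antisymm
    · intro x hx
      rcases Finset.mem_union.mp hx with hx | hx
      · rw [Finset.mem_singleton] at hx
        subst hx
        exact Finset.mem_erase.mpr ⟨Ne.symm hLH, hH⟩
      · exact Finset.mem_of_mem_erase hx
    · intro x hx
      by_cases hxH : x = H
      · exact Finset.mem_union_left _ (by simp [hxH])
      · exact Finset.mem_union_right _ (Finset.mem_erase.mpr ⟨hxH, hx⟩)
  · intro H₁ hH₁ H₂ hH₂ p hp K hK hpK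
    rw [Finset.mem_singleton] at hH₁
    rw [hH₁] at hp ⊢
    have hH₂A : H₂ ∈ A := Finset.mem_of_mem_erase (Finset.mem_of_mem_erase hH₂)
    have hH₂H : H₂ ≠ H := Finset.ne_of_mem_erase hH₂
    have hm : mult A p = 2 := hdouble p hp.1 H₂ hH₂A hH₂H hp.2
    have hsub : ({H, H₂} : Finset (Set P2)) ⊆ A.filter (fun L => p ∈ L) := by
      intro x hx
      rcases Finset.mem_insert.mp hx with rfl | hx
      · exact Finset.mem_filter.mpr ⟨hH, hp.1⟩
      · rw [Finset.mem_singleton] at hx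
        subst hx
        exact Finset.mem_filter.mpr ⟨hH₂A, hp.2⟩
    have hcard2 : ({H, H₂} : Finset (Set P2)).card = 2 := by
      rw [Finset.card_insert_of_notMem (by simpa using (Ne.symm hH₂H)),
        Finset.card_singleton]
    have heq : ({H, H₂} : Finset (Set P2)) = A.filter (fun L => p ∈ L) :=
      Finset.eq_of_subset_of_card_le hsub (by rw [hcard2, ← hm]; rfl)
    have : K ∈ ({H, H₂} : Finset (Set P2)) := by
      rw [heq]; exact Finset.mem_filter.mpr ⟨hK, hpK⟩
    simpa using this
end

section
/- Let A* be a projective line arrangement in ℙ²(ℂ) containing at least three lines. If A* does not have a decone with a general position partition, then for every graph of Fan type F ∈ 𝓕(A*): F is connected, every edge of F is contained in a simple circuit of F, and every line of A* contains a vertex of F (i.e., a point of multiplicity at least three). -/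
open scoped Classical

/-!
Fix a line `L₀ ∈ A` and join two lines of `A ∖ {L₀}` when they meet in a point of `M₃(A)`.
Without a decone with a general position partition this relation is connected on `A ∖ {L₀}`:
otherwise a connected component and its complement would form such a partition, because a
point where two lines from different parts meet and a third line passes would be a triple
point joining them. Along each line the fan graph is a path through all its triple points, so
any two triple points off `L₀` are joined by a walk using only edges that lie on lines other
than `L₀`. Taking for `L₀` the line carrying an edge `vw` (two points determine a line) gives
a second route from `v` to `w`, so no edge is a bridge. The same partition argument with the
part `{L}` shows that a line `L` without triple points would give a general position partition.
-/

lemma IsProjLine.eq_of_ne_of_mem {L K : Set P2} (hL : IsProjLine L) (hK : IsProjLine K)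
    {p q : P2} (hpq : p ≠ q) (hpL : p ∈ L) (hqL : q ∈ L) (hpK : p ∈ K) (hqK : q ∈ K) :
    L = K := by
  obtain ⟨W₁, hW₁, rfl⟩ := hL
  obtain ⟨W₂, hW₂, rfl⟩ := hK
  set U := Submodule.span ℂ (Set.range (Projectivization.rep ∘ ![p, q]))
  have hU : Module.finrank ℂ U = 2 := by
    rw [finrank_span_eq_card (Projectivization.independent_iff.1
      ((Projectivization.independent_pair_iff_ne p q).2 hpq))]
    simp
  have span_eq : ∀ W : Submodule ℂ (Fin 3 → ℂ), Module.finrank ℂ W = 2 →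
      p.rep ∈ W → q.rep ∈ W → U = W := fun W hW hp hq =>
    Submodule.eq_of_le_of_finrank_eq
      (Submodule.span_le.2 (Set.range_subset_iff.2 (Fin.forall_fin_two.2 ⟨hp, hq⟩)))
      (hU.trans hW.symm)
  rw [← span_eq W₁ hW₁ hpL hqL, span_eq W₂ hW₂ hpK hqK]

lemma mem_M3_of_mem_three {A : Finset (Set P2)} {X Y K : Set P2}
    (hX : X ∈ A) (hY : Y ∈ A) (hK : K ∈ A) (hXY : X ≠ Y) (hKX : K ≠ X) (hKY : K ≠ Y)
    {p : P2} (hpX : p ∈ X) (hpY : p ∈ Y) (hpK : p ∈ K) : p ∈ M3 A := by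
  show 3 ≤ (A.filter (p ∈ ·)).card
  calc 3 = ({X, Y, K} : Finset (Set P2)).card :=
        (Finset.card_eq_three.2 ⟨X, Y, K, hXY, hKX.symm, hKY.symm, rfl⟩).symm
    _ ≤ _ := Finset.card_le_card (by
        simp [Finset.insert_subset_iff, hX, hY, hK, hpX, hpY, hpK])

lemma exists_line_ne_of_mem_M3 {A : Finset (Set P2)} (v : ↥(M3 A)) (L : Set P2) :
    ∃ H ∈ A, H ≠ L ∧ (v : P2) ∈ H := by
  have hv : 3 ≤ (A.filter ((v : P2) ∈ ·)).card := v.2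
  obtain ⟨H, hH, hHL⟩ := Finset.exists_mem_ne (s := A.filter ((v : P2) ∈ ·)) (by omega) L
  exact ⟨H, (Finset.mem_filter.1 hH).1, hHL, (Finset.mem_filter.1 hH).2⟩

lemma exists_M3_inter_of_not_hasDeconeGPP {A : Finset (Set P2)} (hngpp : ¬ HasDeconeGPP A)
    {L₀ : Set P2} (hL₀ : L₀ ∈ A) {C : Finset (Set P2)} (hC : C ⊆ A.erase L₀)
    (hC_ne : C.Nonempty) (hC_compl_ne : (A.erase L₀ \ C).Nonempty) :
    ∃ H₁ ∈ C, ∃ H₂ ∈ A.erase L₀ \ C, ∃ p ∈ M3 A, p ∈ H₁ ∧ p ∈ H₂ := by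
  by_contra! hno
  refine hngpp ⟨L₀, hL₀, C, A.erase L₀ \ C, hC_ne, hC_compl_ne, Finset.disjoint_sdiff,
    Finset.union_sdiff_of_subset hC, fun H₁ h₁ H₂ h₂ p hp K hK hpK => ?_⟩
  by_contra! hK_ne
  have h₂' := Finset.mem_sdiff.1 h₂
  have hH₁₂ : H₁ ≠ H₂ := fun h => h₂'.2 (h ▸ h₁)
  exact hno H₁ h₁ H₂ h₂ p (mem_M3_of_mem_three (Finset.mem_of_mem_erase (hC h₁))
    (Finset.mem_of_mem_erase h₂'.1) hK hH₁₂ hK_ne.1 hK_ne.2 hp.1 hp.2 hpK) hp.1 hp.2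

lemma exists_M3_mem_of_not_hasDeconeGPP {A : Finset (Set P2)} (hcard : 3 ≤ A.card)
    (hngpp : ¬ HasDeconeGPP A) {L : Set P2} (hL : L ∈ A) : ∃ p : ↥(M3 A), (p : P2) ∈ L := by
  obtain ⟨L₀, hL₀, hL₀L⟩ := Finset.exists_mem_ne (by omega : 1 < A.card) L
  obtain ⟨H, hH, hHL⟩ := Finset.exists_mem_ne
    (by rw [Finset.card_erase_of_mem hL₀]; omega : 1 < (A.erase L₀).card) L
  obtain ⟨H₁, h₁, -, -, p, hp, hpH₁, -⟩ := exists_M3_inter_of_not_hasDeconeGPP hngpp hL₀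
    (C := {L}) (by simpa using Finset.mem_erase.2 ⟨hL₀L.symm, hL⟩) (Finset.singleton_nonempty L)
    ⟨H, Finset.mem_sdiff.2 ⟨hH, by simpa using hHL⟩⟩
  rw [Finset.mem_singleton] at h₁
  exact ⟨⟨p, hp⟩, h₁ ▸ hpH₁⟩

def SimpleGraph.restrictToLines {A : Finset (Set P2)} (F : SimpleGraph ↥(M3 A))
    (S : Finset (Set P2)) : SimpleGraph ↥(M3 A) where
  Adj v w := F.Adj v w ∧ ∃ K ∈ S, (v : P2) ∈ K ∧ (w : P2) ∈ K
  symm := ⟨fun _ _ ⟨h, K, hK, hv, hw⟩ => ⟨h.symm, K, hK, hw, hv⟩⟩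
  loopless := ⟨fun _ h => h.1.ne rfl⟩

namespace SimpleGraph

variable {A : Finset (Set P2)} {F : SimpleGraph ↥(M3 A)}

@[simp]
lemma restrictToLines_adj {S : Finset (Set P2)} {v w : ↥(M3 A)} :
    (F.restrictToLines S).Adj v w ↔ F.Adj v w ∧ ∃ K ∈ S, (v : P2) ∈ K ∧ (w : P2) ∈ K :=
  Iff.rfl

lemma restrictToLines_le (S : Finset (Set P2)) : F.restrictToLines S ≤ F :=
  fun _ _ h => (restrictToLines_adj.1 h).1

lemma restrictToLines_reachable_of_mem (hF : IsFanGraph A F) {S : Finset (Set P2)}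
    {L : Set P2} (hL : L ∈ A) (hLS : L ∈ S) {v w : ↥(M3 A)} (hv : (v : P2) ∈ L)
    (hw : (w : P2) ∈ L) : (F.restrictToLines S).Reachable v w := by
  obtain ⟨m, e, -, he_mem, he_adj⟩ := hF.2 L hL ⟨v, hv⟩
  have heL : ∀ i, (e i : P2) ∈ L := fun i => (he_mem (e i)).2 ⟨i, rfl⟩
  have reach_first : ∀ i (hi : i < m),
      (F.restrictToLines S).Reachable (e ⟨0, by omega⟩) (e ⟨i, hi⟩) := by
    intro i
    induction i with
    | zero => exact fun _ => Reachable.refl _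
    | succ i ih =>
      intro hi
      refine (ih (by omega)).trans
        (Adj.reachable (restrictToLines_adj.2 ⟨?_, L, hLS, heL _, heL _⟩))
      exact (he_adj _ _ (heL _) (heL _)).2 ⟨_, _, rfl, Or.inl ⟨rfl, rfl⟩⟩
  obtain ⟨i, rfl⟩ := (he_mem v).1 hv
  obtain ⟨j, rfl⟩ := (he_mem w).1 hw
  exact (reach_first i i.2).symm.trans (reach_first j j.2)

lemma restrictToLines_reachable (hF : IsFanGraph A F) (hngpp : ¬ HasDeconeGPP A)
    {L₀ H H' : Set P2} (hL₀ : L₀ ∈ A) (hH : H ∈ A.erase L₀) (hH' : H' ∈ A.erase L₀)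
    {v w : ↥(M3 A)} (hv : (v : P2) ∈ H) (hw : (w : P2) ∈ H') :
    (F.restrictToLines (A.erase L₀)).Reachable v w := by
  set G := F.restrictToLines (A.erase L₀)
  by_contra hvw
  set C := (A.erase L₀).filter fun X => ∃ u : ↥(M3 A), (u : P2) ∈ X ∧ G.Reachable v u
  have mem_C_of_reachable :
      ∀ {X} {u : ↥(M3 A)}, X ∈ A.erase L₀ → (u : P2) ∈ X → G.Reachable v u → X ∈ C :=
    fun hX hu hvu => Finset.mem_filter.2 ⟨hX, _, hu, hvu⟩
  have reachable_of_mem_C : ∀ {X} {u : ↥(M3 A)}, X ∈ C → (u : P2) ∈ X → G.Reachable v u := by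
    intro X u hX hu
    obtain ⟨hX, u', hu', hvu'⟩ := Finset.mem_filter.1 hX
    exact hvu'.trans (restrictToLines_reachable_of_mem hF (Finset.mem_of_mem_erase hX) hX hu' hu)
  obtain ⟨H₁, h₁, H₂, h₂, p, hp, hpH₁, hpH₂⟩ := exists_M3_inter_of_not_hasDeconeGPP hngpp hL₀
    (Finset.filter_subset _ _) ⟨H, mem_C_of_reachable hH hv (Reachable.refl v)⟩
    ⟨H', Finset.mem_sdiff.2 ⟨hH', fun h => hvw (reachable_of_mem_C h hw)⟩⟩
  have h₂' := Finset.mem_sdiff.1 h₂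
  exact h₂'.2 (mem_C_of_reachable (u := ⟨p, hp⟩) h₂'.1 hpH₂ (reachable_of_mem_C h₁ hpH₁))

lemma not_isBridge_of_isFanGraph (hA : ∀ L ∈ A, IsProjLine L) (hF : IsFanGraph A F)
    (hngpp : ¬ HasDeconeGPP A) {e : Sym2 ↥(M3 A)} (he : e ∈ F.edgeSet) : ¬ F.IsBridge e := by
  obtain ⟨v, w⟩ := e
  obtain ⟨L, hL, hvL, hwL⟩ := hF.1 v w he
  obtain ⟨H, hH, hHL, hvH⟩ := exists_line_ne_of_mem_M3 v L
  obtain ⟨H', hH', hH'L, hwH'⟩ := exists_line_ne_of_mem_M3 w L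
  have hle : F.restrictToLines (A.erase L) ≤ F.deleteEdges {s(v, w)} := by
    intro a b hab
    obtain ⟨hab, K, hK, haK, hbK⟩ := restrictToLines_adj.1 hab
    refine (deleteEdges_adj ..).2 ⟨hab, fun hvw => ?_⟩
    have hvwK : (v : P2) ∈ K ∧ (w : P2) ∈ K := by
      rcases Sym2.eq_iff.1 (Set.mem_singleton_iff.1 hvw) with ⟨rfl, rfl⟩ | ⟨rfl, rfl⟩
      exacts [⟨haK, hbK⟩, ⟨hbK, haK⟩]
    obtain ⟨hKL, hKA⟩ := Finset.mem_erase.1 hK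
    exact hKL (IsProjLine.eq_of_ne_of_mem (hA K hKA) (hA L hL)
      (Subtype.coe_injective.ne (F.ne_of_adj he)) hvwK.1 hvwK.2 hvL hwL)
  rw [isBridge_iff, not_not]
  exact (restrictToLines_reachable hF hngpp hL (Finset.mem_erase.2 ⟨hHL, hH⟩)
    (Finset.mem_erase.2 ⟨hH'L, hH'⟩) hvH hwH').mono hle

end SimpleGraph

open SimpleGraph in
theorem no_gpp_implies_fan_graphs_connected_and_bridgeless
    (A : Finset (Set P2)) (hA : ∀ L ∈ A, IsProjLine L) (hcard : 3 ≤ A.card)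
    (hngpp : ¬ HasDeconeGPP A) :
    ∀ F : SimpleGraph ↥(M3 A), IsFanGraph A F →
      F.Connected ∧
      (∀ e ∈ F.edgeSet, ∃ (u : ↥(M3 A)) (cW : F.Walk u u), cW.IsCycle ∧ e ∈ cW.edges) ∧
      (∀ L ∈ A, ∃ p : ↥(M3 A), (p : P2) ∈ L) := by
  intro F hF
  have hvert : ∀ L ∈ A, ∃ p : ↥(M3 A), (p : P2) ∈ L :=
    fun L hL => exists_M3_mem_of_not_hasDeconeGPP hcard hngpp hL
  obtain ⟨L₀, hL₀⟩ := Finset.card_pos.1 (by omega : 0 < A.card)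
  have hpre : F.Preconnected := fun v w => by
    obtain ⟨H, hH, hHL₀, hvH⟩ := exists_line_ne_of_mem_M3 v L₀
    obtain ⟨H', hH', hH'L₀, hwH'⟩ := exists_line_ne_of_mem_M3 w L₀
    exact (restrictToLines_reachable hF hngpp hL₀ (Finset.mem_erase.2 ⟨hHL₀, hH⟩)
      (Finset.mem_erase.2 ⟨hH'L₀, hH'⟩) hvH hwH').mono (restrictToLines_le _)
  refine ⟨(connected_iff F).2 ⟨hpre, ⟨(hvert L₀ hL₀).choose⟩⟩, fun e he => ?_, hvert⟩
  by_contra! hno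
  exact not_isBridge_of_isFanGraph hA hF hngpp he ((isBridge_iff_forall_cycle_notMem he).2 hno)
end

section
/- Let A* be a projective line arrangement in ℙ²(ℂ), let L ∈ A*, and let v and w be two distinct points of M₃(A*) lying on L. Suppose that for every graph of Fan type F ∈ 𝓕(A*) in which {v, w} is an edge, every simple circuit of F containing the edge {v, w} has at least two edges lying on the line L. Then A* has a decone with a general position partition. -/
open scoped Classical

/-!
Let `Γ` be the graph on `M₃(A)` joining two points that lie on a common line other than `L`.
If `v` and `w` lie in different components of `Γ`, split the lines other than `L` into those
meeting the component of `v` and the others: a third line through the intersection point of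
two lines from different classes would make that point a vertex of `Γ` linking the classes,
so this is a general position partition of the decone at `L`.
Otherwise take a shortest path of `Γ` from `w` to `v`. It uses each line at most once, so a
graph of Fan type can be chosen to contain its edges and `{v, w}`; closing the path with
`{v, w}` gives a circuit whose only edge on `L` is `{v, w}`.
-/

theorem List.pair_infix_iff_get {α : Type*} {l : List α} {x y : α} :
    [x, y] <:+: l ↔ ∃ i j : Fin l.length, (j : ℕ) = i + 1 ∧ l.get i = x ∧ l.get j = y := by
  rw [List.infix_iff_getElem?]
  constructor
  · rintro ⟨k, hk, h⟩
    have h0 := h 0 (by simp)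
    have h1 := h 1 (by simp)
    simp only [List.length_cons, List.length_nil] at hk
    refine ⟨⟨k, by omega⟩, ⟨k + 1, by omega⟩, rfl, ?_, ?_⟩
    · simpa [List.getElem?_eq_getElem (show k < l.length by omega)] using h0
    · simpa [add_comm, List.getElem?_eq_getElem (show k + 1 < l.length by omega)] using h1
  · rintro ⟨i, j, hij, rfl, rfl⟩
    refine ⟨i, by simp; omega, fun n hn => ?_⟩
    simp only [List.length_cons, List.length_nil] at hn
    interval_cases n <;> simp [hij, add_comm]

theorem Set.Finite.exists_nodup_list_with_prefix {α : Type*} {s : Set α} (hs : s.Finite)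
    {a b : α} (ha : a ∈ s) (hb : b ∈ s) (hab : a ≠ b) :
    ∃ l : List α, l.Nodup ∧ (∀ x, x ∈ l ↔ x ∈ s) ∧ [a, b] <+: l := by
  classical
  refine ⟨a :: b :: ((hs.toFinset.erase a).erase b).toList, ?_, fun x => ?_, by simp⟩
  · simp [hab, Finset.nodup_toList]
  · simp only [List.mem_cons, Finset.mem_toList, Finset.mem_erase, Set.Finite.mem_toFinset]
    grind

namespace SimpleGraph.Walk
variable {V : Type*} {G : SimpleGraph V} {u v : V}

theorem sub_le_dist_getVert_of_length_eq_dist {p : G.Walk u v} (hp : p.length = G.dist u v)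
    {i j : ℕ} (hj : j ≤ p.length) : j - i ≤ G.dist (p.getVert i) (p.getVert j) := by
  obtain ⟨s, hs⟩ :=
    ((p.take i).reachable.symm.trans (p.take j).reachable).exists_walk_length_eq_dist
  have := G.dist_le ((p.take i).append (s.append (p.drop j)))
  simp only [length_append, take_length, drop_length, hs] at this
  omega

theorem exists_two_le_dist_of_mem_edges {p : G.Walk u v} (hp : p.length = G.dist u v)
    {e₁ e₂ : Sym2 V} (he₁ : e₁ ∈ p.edges) (he₂ : e₂ ∈ p.edges) (hne : e₁ ≠ e₂) :
    ∃ x ∈ e₁, ∃ y ∈ e₂, 2 ≤ G.dist x y := by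
  obtain ⟨i, hi, rfl⟩ := List.mem_iff_getElem.1 he₁
  obtain ⟨j, hj, rfl⟩ := List.mem_iff_getElem.1 he₂
  have hij : i ≠ j := by rintro rfl; exact hne rfl
  rw [length_edges] at hi hj
  rw [getElem_edges, getElem_edges]
  rcases lt_or_gt_of_ne hij with hij | hij
  · exact ⟨_, Sym2.mem_mk_left _ _, _, Sym2.mem_mk_right _ _,
      (by omega : 2 ≤ j + 1 - i).trans (sub_le_dist_getVert_of_length_eq_dist hp (by omega))⟩
  · refine ⟨_, Sym2.mem_mk_right _ _, _, Sym2.mem_mk_left _ _, ?_⟩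
    rw [dist_comm]
    exact (by omega : 2 ≤ i + 1 - j).trans (sub_le_dist_getVert_of_length_eq_dist hp (by omega))

end SimpleGraph.Walk

theorem IsProjLine.eq_of_mem_of_mem {H K : Set P2} (hH : IsProjLine H) (hK : IsProjLine K)
    {x y : P2} (hxy : x ≠ y) (hxH : x ∈ H) (hxK : x ∈ K) (hyH : y ∈ H) (hyK : y ∈ K) :
    H = K := by
  obtain ⟨W, hW, rfl⟩ := hH
  obtain ⟨W', hW', rfl⟩ := hK
  have hind : LinearIndependent ℂ ![x.rep, y.rep] := by
    have := Projectivization.independent_iff.1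
      ((Projectivization.independent_pair_iff_ne x y).2 hxy)
    rwa [show Projectivization.rep ∘ ![x, y] = ![x.rep, y.rep] by ext i; fin_cases i <;> rfl]
      at this
  have hspan : ∀ U : Submodule ℂ (Fin 3 → ℂ), Module.finrank ℂ U = 2 → x.rep ∈ U → y.rep ∈ U →
      Submodule.span ℂ (Set.range ![x.rep, y.rep]) = U := by
    intro U hU hx hy
    refine Submodule.eq_of_le_of_finrank_le ?_ (by rw [finrank_span_eq_card hind, hU]; simp)
    rw [Submodule.span_le, Set.range_subset_iff]
    intro i; fin_cases i <;> simpa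
  rw [← hspan W hW hxH hyH, hspan W' hW' hxK hyK]

theorem mem_M3_of_three_lines {A : Finset (Set P2)} {p : P2} {H K M : Set P2}
    (hH : H ∈ A) (hK : K ∈ A) (hM : M ∈ A) (hHK : H ≠ K) (hHM : H ≠ M) (hKM : K ≠ M)
    (pH : p ∈ H) (pK : p ∈ K) (pM : p ∈ M) : p ∈ M3 A := by
  have hsub : ({H, K, M} : Finset (Set P2)) ⊆ A.filter (fun L => p ∈ L) := by
    intro X hX
    simp only [Finset.mem_insert, Finset.mem_singleton] at hX
    rcases hX with rfl | rfl | rfl <;> simp [*]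
  exact (Finset.card_eq_three.2 ⟨H, K, M, hHK, hHM, hKM, rfl⟩).symm.le.trans
    (Finset.card_le_card hsub)

theorem exists_mem_erase_of_mem_M3 {A : Finset (Set P2)} (L : Set P2) (x : M3 A) :
    ∃ H ∈ A.erase L, (x : P2) ∈ H := by
  obtain ⟨H, hH, hHL⟩ := Finset.exists_mem_ne (Nat.lt_of_lt_of_le (by norm_num) x.2) L
  rw [Finset.mem_filter] at hH
  exact ⟨H, Finset.mem_erase.2 ⟨hHL, hH.1⟩, hH.2⟩

theorem M3_finite {A : Finset (Set P2)} (hA : ∀ L ∈ A, IsProjLine L) : (M3 A).Finite := by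
  refine (A.finite_toSet.biUnion fun H hH => (A.erase H).finite_toSet.biUnion fun K hK =>
    Set.Subsingleton.finite (s := H ∩ K) fun x hx y hy => ?_).subset fun x hx => ?_
  · by_contra hxy
    exact (Finset.mem_erase.1 hK).1 ((hA H hH).eq_of_mem_of_mem
      (hA K (Finset.mem_of_mem_erase hK)) hxy hx.1 hx.2 hy.1 hy.2).symm
  · obtain ⟨H, hH, K, hK, hHK⟩ := Finset.one_lt_card.1 (show 1 < (A.filter (x ∈ ·)).card
      from Nat.lt_of_lt_of_le (by norm_num) hx)
    rw [Finset.mem_filter] at hH hK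
    simp only [Set.mem_iUnion]
    exact ⟨H, hH.1, K, Finset.mem_erase.2 ⟨hHK.symm, hK.1⟩, hH.2, hK.2⟩

section FanGraph

variable {A : Finset (Set P2)}

def consecutiveGraph (A : Finset (Set P2)) (enum : Set P2 → List (M3 A)) :
    SimpleGraph (M3 A) :=
  SimpleGraph.fromRel fun x y => ∃ ℓ ∈ A, [x, y] <:+: enum ℓ

theorem isFanGraph_consecutiveGraph (hA : ∀ L ∈ A, IsProjLine L) (enum : Set P2 → List (M3 A))
    (hnodup : ∀ ℓ, (enum ℓ).Nodup) (hmem : ∀ ℓ x, x ∈ enum ℓ ↔ (x : P2) ∈ ℓ) :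
    IsFanGraph A (consecutiveGraph A enum) := by
  have mem_of_infix : ∀ {ℓ x y}, [x, y] <:+: enum ℓ → (x : P2) ∈ ℓ ∧ (y : P2) ∈ ℓ :=
    fun h => ⟨(hmem _ _).1 (h.subset (by simp)), (hmem _ _).1 (h.subset (by simp))⟩
  refine ⟨?_, fun ℓ hℓ _ => ⟨_, (enum ℓ).get, List.nodup_iff_injective_get.1 (hnodup ℓ),
    fun x => by rw [← hmem, List.mem_iff_get], fun x y hx hy => ?_⟩⟩
  · rintro x y ⟨-, ⟨ℓ, hℓ, h⟩ | ⟨ℓ, hℓ, h⟩⟩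
    · exact ⟨ℓ, hℓ, mem_of_infix h⟩
    · exact ⟨ℓ, hℓ, (mem_of_infix h).symm⟩
  have on_ℓ : ∀ {a b : M3 A}, (a : P2) ∈ ℓ → (b : P2) ∈ ℓ →
      ((a ≠ b ∧ ∃ ℓ' ∈ A, [a, b] <:+: enum ℓ') ↔ [a, b] <:+: enum ℓ) := by
    intro a b ha hb
    refine ⟨fun ⟨hab, ℓ', hℓ', h⟩ => ?_, fun h => ⟨?_, ℓ, hℓ, h⟩⟩
    · obtain ⟨ha', hb'⟩ := mem_of_infix h
      rwa [(hA ℓ' hℓ').eq_of_mem_of_mem (hA ℓ hℓ) (Subtype.coe_ne_coe.2 hab) ha' ha hb' hb] at h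
    · simpa using (hnodup ℓ).sublist h.sublist
  rw [consecutiveGraph, SimpleGraph.fromRel_adj, and_or_left, on_ℓ hx hy,
    ← ne_comm, on_ℓ hy hx, List.pair_infix_iff_get, List.pair_infix_iff_get]
  simp only [and_or_left, exists_or]

theorem exists_isFanGraph_superset (hA : ∀ L ∈ A, IsProjLine L) (E : Set (Sym2 (M3 A)))
    (hdiag : ∀ e ∈ E, ¬ e.IsDiag) (hline : ∀ e ∈ E, ∃ ℓ ∈ A, ∀ x ∈ e, (x : P2) ∈ ℓ)
    (hsep : ∀ ℓ ∈ A, ∀ e₁ ∈ E, ∀ e₂ ∈ E,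
      (∀ x ∈ e₁, (x : P2) ∈ ℓ) → (∀ x ∈ e₂, (x : P2) ∈ ℓ) → e₁ = e₂) :
    ∃ F, IsFanGraph A F ∧ E ⊆ F.edgeSet := by
  have : Finite (M3 A) := (M3_finite hA).to_subtype
  have enum_exists : ∀ ℓ, ∃ l : List (M3 A), l.Nodup ∧ (∀ x, x ∈ l ↔ (x : P2) ∈ ℓ) ∧
      ∀ e ∈ E, ℓ ∈ A → (∀ x ∈ e, (x : P2) ∈ ℓ) → ∃ a b, e = s(a, b) ∧ [a, b] <:+: l := by
    intro ℓ
    have hfin := Set.toFinite {x : M3 A | (x : P2) ∈ ℓ}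
    by_cases h : ∃ e ∈ E, ℓ ∈ A ∧ ∀ x ∈ e, (x : P2) ∈ ℓ
    · obtain ⟨e, he, hℓ, heℓ⟩ := h
      induction e using Sym2.ind with
      | _ a b =>
        obtain ⟨l, hl, hmem, hpre⟩ := hfin.exists_nodup_list_with_prefix (heℓ a (by simp))
          (heℓ b (by simp)) (by simpa using hdiag _ he)
        exact ⟨l, hl, hmem, fun e' he' _ he'ℓ =>
          ⟨a, b, hsep ℓ hℓ e' he' _ he he'ℓ heℓ, hpre.isInfix⟩⟩
    · exact ⟨hfin.toFinset.toList, Finset.nodup_toList _, by simp,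
        fun e he hℓ heℓ => (h ⟨e, he, hℓ, heℓ⟩).elim⟩
  choose enum hnodup hmem hE using enum_exists
  refine ⟨consecutiveGraph A enum, isFanGraph_consecutiveGraph hA enum hnodup hmem,
    fun e he => ?_⟩
  obtain ⟨ℓ, hℓ, heℓ⟩ := hline e he
  obtain ⟨a, b, rfl, hab⟩ := hE ℓ e he hℓ heℓ
  exact ⟨by simpa using hdiag _ he, Or.inl ⟨ℓ, hℓ, hab⟩⟩

end FanGraph

section CollinearGraph

variable {A : Finset (Set P2)}

def collinearGraph (A B : Finset (Set P2)) : SimpleGraph (M3 A) where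
  Adj x y := x ≠ y ∧ ∃ ℓ ∈ B, (x : P2) ∈ ℓ ∧ (y : P2) ∈ ℓ
  symm := ⟨fun _ _ ⟨hne, ℓ, hℓ, hx, hy⟩ => ⟨hne.symm, ℓ, hℓ, hy, hx⟩⟩
  loopless := ⟨fun _ h => h.1 rfl⟩

theorem collinearGraph_eq_or_adj {B : Finset (Set P2)} {ℓ : Set P2} (hℓ : ℓ ∈ B)
    {x y : M3 A} (hx : (x : P2) ∈ ℓ) (hy : (y : P2) ∈ ℓ) :
    x = y ∨ (collinearGraph A B).Adj x y :=
  or_iff_not_imp_left.2 fun hxy => ⟨hxy, ℓ, hℓ, hx, hy⟩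

theorem collinearGraph_dist_le_one {B : Finset (Set P2)} {ℓ : Set P2} (hℓ : ℓ ∈ B)
    {x y : M3 A} (hx : (x : P2) ∈ ℓ) (hy : (y : P2) ∈ ℓ) :
    (collinearGraph A B).dist x y ≤ 1 := by
  rcases collinearGraph_eq_or_adj hℓ hx hy with rfl | h
  · simp
  · exact (SimpleGraph.dist_eq_one_iff_adj.2 h).le

theorem exists_line_of_mem_edgeSet_collinearGraph {B : Finset (Set P2)} {e : Sym2 (M3 A)}
    (he : e ∈ (collinearGraph A B).edgeSet) : ∃ ℓ ∈ B, ∀ x ∈ e, (x : P2) ∈ ℓ := by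
  induction e using Sym2.ind with
  | _ x y =>
    obtain ⟨-, ℓ, hℓ, hx, hy⟩ := he
    exact ⟨ℓ, hℓ, by simp [hx, hy]⟩

theorem not_forall_mem_of_mem_edgeSet_collinearGraph (hA : ∀ L ∈ A, IsProjLine L)
    {L : Set P2} (hL : L ∈ A) {e : Sym2 (M3 A)}
    (he : e ∈ (collinearGraph A (A.erase L)).edgeSet) : ¬ ∀ x ∈ e, (x : P2) ∈ L := by
  induction e using Sym2.ind with
  | _ x y =>
    obtain ⟨hxy, ℓ, hℓ, hx, hy⟩ := he
    intro hxyL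
    exact (Finset.mem_erase.1 hℓ).1 ((hA ℓ (Finset.mem_of_mem_erase hℓ)).eq_of_mem_of_mem
      (hA L hL) (Subtype.coe_ne_coe.2 hxy) hx (hxyL x (by simp)) hy (hxyL y (by simp)))

theorem hasDeconeGPP_of_not_reachable {L : Set P2} (hL : L ∈ A) {v w : M3 A}
    (hvw : ¬ (collinearGraph A (A.erase L)).Reachable v w) : HasDeconeGPP A := by
  set G := collinearGraph A (A.erase L)
  set meets : Set P2 → Prop := fun H => ∃ x : M3 A, G.Reachable v x ∧ (x : P2) ∈ H
  refine ⟨L, hL, (A.erase L).filter meets, (A.erase L).filter (¬ meets ·), ?_, ?_,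
    Finset.disjoint_filter_filter_not _ _ _, Finset.filter_union_filter_not_eq _ _, ?_⟩
  · obtain ⟨H, hH, hvH⟩ := exists_mem_erase_of_mem_M3 L v
    exact ⟨H, Finset.mem_filter.2 ⟨hH, v, SimpleGraph.Reachable.refl v, hvH⟩⟩
  · obtain ⟨K, hK, hwK⟩ := exists_mem_erase_of_mem_M3 L w
    refine ⟨K, Finset.mem_filter.2 ⟨hK, fun ⟨x, hvx, hxK⟩ => hvw ?_⟩⟩
    rcases collinearGraph_eq_or_adj hK hxK hwK with rfl | h
    exacts [hvx, hvx.trans h.reachable]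
  · intro H₁ h₁ H₂ h₂ p ⟨hp₁, hp₂⟩ K hK hpK
    rw [Finset.mem_filter] at h₁ h₂
    by_contra! hK₁₂
    have hp : p ∈ M3 A := mem_M3_of_three_lines (Finset.mem_of_mem_erase h₁.1)
      (Finset.mem_of_mem_erase h₂.1) hK (fun h => h₂.2 (h ▸ h₁.2)) hK₁₂.1.symm hK₁₂.2.symm
      hp₁ hp₂ hpK
    obtain ⟨x, hvx, hxH₁⟩ := h₁.2
    refine h₂.2 ⟨⟨p, hp⟩, ?_, hp₂⟩
    rcases collinearGraph_eq_or_adj h₁.1 hxH₁ (y := ⟨p, hp⟩) hp₁ with rfl | h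
    exacts [hvx, hvx.trans h.reachable]

end CollinearGraph

theorem exists_isFanGraph_of_length_eq_dist {A : Finset (Set P2)} (hA : ∀ L ∈ A, IsProjLine L)
    {L : Set P2} (hL : L ∈ A) {v w : M3 A} (hvw : v ≠ w) (hvL : (v : P2) ∈ L)
    (hwL : (w : P2) ∈ L) {a b : M3 A} (P : (collinearGraph A (A.erase L)).Walk a b)
    (hP : P.length = (collinearGraph A (A.erase L)).dist a b) :
    ∃ F, IsFanGraph A F ∧ F.Adj v w ∧ ∀ e ∈ P.edges, e ∈ F.edgeSet := by
  have hoff : ∀ e ∈ P.edges, ¬ ∀ x ∈ e, (x : P2) ∈ L := fun e he =>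
    not_forall_mem_of_mem_edgeSet_collinearGraph hA hL (P.edges_subset_edgeSet he)
  have hvwℓ : ∀ ℓ ∈ A, (∀ x ∈ s(v, w), (x : P2) ∈ ℓ) → ℓ = L := fun ℓ hℓ h =>
    (hA ℓ hℓ).eq_of_mem_of_mem (hA L hL) (Subtype.coe_ne_coe.2 hvw) (h v (by simp)) hvL
      (h w (by simp)) hwL
  set E : Set (Sym2 (M3 A)) := insert s(v, w) {e | e ∈ P.edges}
  have hdiag : ∀ e ∈ E, ¬ e.IsDiag := by
    rintro e (rfl | he)
    · simpa using hvw
    · exact SimpleGraph.not_isDiag_of_mem_edgeSet _ (P.edges_subset_edgeSet he)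
  have hline : ∀ e ∈ E, ∃ ℓ ∈ A, ∀ x ∈ e, (x : P2) ∈ ℓ := by
    rintro e (rfl | he)
    · exact ⟨L, hL, by simp [hvL, hwL]⟩
    · obtain ⟨ℓ, hℓ, h⟩ := exists_line_of_mem_edgeSet_collinearGraph (P.edges_subset_edgeSet he)
      exact ⟨ℓ, Finset.mem_of_mem_erase hℓ, h⟩
  have hsep : ∀ ℓ ∈ A, ∀ e₁ ∈ E, ∀ e₂ ∈ E,
      (∀ x ∈ e₁, (x : P2) ∈ ℓ) → (∀ x ∈ e₂, (x : P2) ∈ ℓ) → e₁ = e₂ := by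
    rintro ℓ hℓ e₁ (rfl | he₁) e₂ (rfl | he₂) h₁ h₂
    · rfl
    · exact (hoff e₂ he₂ (hvwℓ ℓ hℓ h₁ ▸ h₂)).elim
    · exact (hoff e₁ he₁ (hvwℓ ℓ hℓ h₂ ▸ h₁)).elim
    -- a shortest walk cannot use a line twice, as that line would shortcut it
    · by_contra hne
      obtain ⟨x, hx, y, hy, hxy⟩ := P.exists_two_le_dist_of_mem_edges hP he₁ he₂ hne
      have hℓL : ℓ ≠ L := by rintro rfl; exact hoff e₁ he₁ h₁
      have := collinearGraph_dist_le_one (Finset.mem_erase.2 ⟨hℓL, hℓ⟩) (h₁ x hx) (h₂ y hy)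
      omega
  obtain ⟨F, hF, hEF⟩ := exists_isFanGraph_superset hA E hdiag hline hsep
  exact ⟨F, hF, hEF (Set.mem_insert _ _), fun e he => hEF (Set.mem_insert_of_mem _ he)⟩

theorem circuits_repeating_line_give_gpp
    (A : Finset (Set P2)) (hA : ∀ L ∈ A, IsProjLine L)
    (L : Set P2) (hL : L ∈ A)
    (v w : ↥(M3 A)) (hvw : v ≠ w) (hvL : (v : P2) ∈ L) (hwL : (w : P2) ∈ L)
    (hcirc : ∀ F : SimpleGraph ↥(M3 A), IsFanGraph A F → F.Adj v w →
      ∀ (u : ↥(M3 A)) (cW : F.Walk u u), cW.IsCycle → s(v, w) ∈ cW.edges →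
        ∃ e₁ ∈ cW.edges, ∃ e₂ ∈ cW.edges, e₁ ≠ e₂ ∧
          (∀ x ∈ e₁, (x : P2) ∈ L) ∧ (∀ x ∈ e₂, (x : P2) ∈ L)) :
    HasDeconeGPP A := by
  by_cases hwv : (collinearGraph A (A.erase L)).Reachable w v
  swap
  · exact hasDeconeGPP_of_not_reachable hL hwv
  obtain ⟨P, hP, hPlen⟩ := hwv.exists_path_of_dist
  obtain ⟨F, hF, hvwF, hPF⟩ := exists_isFanGraph_of_length_eq_dist hA hL hvw hvL hwL P hPlen
  have hoff : ∀ e ∈ P.edges, ¬ ∀ x ∈ e, (x : P2) ∈ L := fun e he =>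
    not_forall_mem_of_mem_edgeSet_collinearGraph hA hL (P.edges_subset_edgeSet he)
  set C := SimpleGraph.Walk.cons hvwF (P.transfer F hPF)
  have hC : C.IsCycle := by
    rw [SimpleGraph.Walk.cons_isCycle_iff, SimpleGraph.Walk.edges_transfer]
    exact ⟨hP.transfer hPF, fun h => hoff _ h (by simp [hvL, hwL])⟩
  have hCL : ∀ e ∈ C.edges, (∀ x ∈ e, (x : P2) ∈ L) → e = s(v, w) := by
    intro e he heL
    simp only [C, SimpleGraph.Walk.edges_cons, SimpleGraph.Walk.edges_transfer,
      List.mem_cons] at he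
    exact he.resolve_right fun h => hoff e h heL
  obtain ⟨e₁, he₁, e₂, he₂, hne, h₁, h₂⟩ := hcirc F hF hvwF v C hC (by simp [C])
  exact (hne ((hCL e₁ he₁ h₁).trans (hCL e₂ he₂ h₂).symm)).elim
end
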